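/- Let R be a commutative local ring and V a free R-module of rank 2m with a nondegenerate alternating bilinear form admitting a symplectic basis. Then the symplectic group Sp(V) is generated by symplectic transvections f_{a,v}(u) = u + a⟨v,u⟩v with a ∈ R and v a basis vector; in particular every symplectic transformation of V has determinant 1. -/

import Mathlib

/-
Over a local ring, a vector pairing to a unit with some vector has a unit coordinate in `b`, so it
is itself a basis vector. Hence if `⟨x, u⟩` is a unit, the transvection along `x - u` with a
suitable coefficient sends `u` to `x` and fixes `(x - u)^⊥`; if not, one passes through an
intermediate vector `z` with `⟨z, u⟩` and `⟨x, z⟩` units. Applied twice, this produces for every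
isometry `g` fixing a set `S` and every hyperbolic pair `(e, f)` orthogonal to `S` a product of
transvections agreeing with `g` on `S`, `e` and `f`. Peeling off the pairs of the symplectic basis
one at a time writes `g` as such a product. Transvections have determinant one.
-/

variable {R V : Type*} [CommRing R] [AddCommGroup V] [Module R V]

/-- `v` is a basis vector of the free module `V` of rank `2m`. -/
def IsBasisVector (R : Type*) {V : Type*} [CommRing R] [AddCommGroup V] [Module R V]
    (m : ℕ) (v : V) : Prop :=
  ∃ (c : Module.Basis (Fin m ⊕ Fin m) R V) (i : Fin m ⊕ Fin m), c i = v

/-- The symplectic transvection `f_{a,v} : u ↦ u + a ⟨v,u⟩ v`. -/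
def sympTransvect (B : V →ₗ[R] V →ₗ[R] R) (a : R) (v : V) : Module.End R V :=
  LinearMap.id + LinearMap.smulRight (a • B v) v

/-- The set of invertible endomorphisms given by symplectic transvections `f_{a,v}`
with `a ∈ R` and `v` a basis vector. -/
def sympTransvSet (B : V →ₗ[R] V →ₗ[R] R) (m : ℕ) : Set (Module.End R V)ˣ :=
  {g | ∃ (a : R) (v : V), IsBasisVector R m v ∧
    (g : Module.End R V) = sympTransvect B a v}


lemma sympTransvect_eq_transvection (B : V →ₗ[R] V →ₗ[R] R) (a : R) (v : V) :
    sympTransvect B a v = LinearMap.transvection (a • B v) v := by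
  ext u
  simp [sympTransvect, LinearMap.transvection.apply]

lemma sympTransvect_apply (B : V →ₗ[R] V →ₗ[R] R) (a : R) (v u : V) :
    sympTransvect B a v u = u + (a * B v u) • v := by
  simp [sympTransvect_eq_transvection, LinearMap.transvection.apply]

lemma det_sympTransvect {B : V →ₗ[R] V →ₗ[R] R} (hB : B.IsAlt) (a : R) (v : V) :
    LinearMap.det (sympTransvect B a v) = 1 := by
  have hv : (a • B v) v = 0 := by simp [hB.self_eq_zero]
  rw [sympTransvect_eq_transvection, ← LinearEquiv.transvection.coe_toLinearMap hv,
    ← LinearEquiv.coe_det, LinearEquiv.transvection.det_eq_one, Units.val_one]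

lemma exists_mem_sympTransvSet {B : V →ₗ[R] V →ₗ[R] R} (hB : B.IsAlt) {m : ℕ} (a : R) {v : V}
    (hv : IsBasisVector R m v) :
    ∃ t ∈ sympTransvSet B m, (t : Module.End R V) = sympTransvect B a v := by
  have hav : (a • B v) v = 0 := by simp [hB.self_eq_zero]
  have ht : ((LinearMap.GeneralLinearGroup.ofLinearEquiv (LinearEquiv.transvection hav) :
      (Module.End R V)ˣ) : Module.End R V) = sympTransvect B a v := by
    ext
    simp [sympTransvect_eq_transvection]
  exact ⟨_, ⟨a, v, hv, ht⟩, ht⟩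

lemma Module.End.units_inv_apply_apply (t : (Module.End R V)ˣ) (x : V) :
    (↑t⁻¹ : Module.End R V) ((t : Module.End R V) x) = x := by
  rw [← Module.End.mul_apply, Units.inv_mul, Module.End.one_apply]

lemma Module.End.units_apply_inv_apply (t : (Module.End R V)ˣ) (x : V) :
    (t : Module.End R V) ((↑t⁻¹ : Module.End R V) x) = x := by
  rw [← Module.End.mul_apply, Units.mul_inv, Module.End.one_apply]

def isometryGroup (B : V →ₗ[R] V →ₗ[R] R) : Subgroup (Module.End R V)ˣ where
  carrier := {g | B.IsOrthogonal (g : Module.End R V)}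
  one_mem' _ _ := rfl
  mul_mem' hg hh x y := (hg _ _).trans (hh x y)
  inv_mem' {g} hg x y := by
    rw [← hg]
    simp only [Module.End.units_apply_inv_apply]

lemma closure_sympTransvSet_le_isometryGroup {B : V →ₗ[R] V →ₗ[R] R} (hB : B.IsAlt) (m : ℕ) :
    Subgroup.closure (sympTransvSet B m) ≤ isometryGroup B := by
  rw [Subgroup.closure_le]
  rintro t ⟨a, v, -, ht⟩ x y
  simp only [ht, sympTransvect_apply, map_add, map_smul, LinearMap.add_apply,
    LinearMap.smul_apply, smul_eq_mul, hB.self_eq_zero, ← hB.neg x v]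
  ring

lemma det_eq_one_of_mem_closure_sympTransvSet {B : V →ₗ[R] V →ₗ[R] R} (hB : B.IsAlt) {m : ℕ}
    {g : (Module.End R V)ˣ} (hg : g ∈ Subgroup.closure (sympTransvSet B m)) :
    LinearMap.det (g : Module.End R V) = 1 := by
  suffices Subgroup.closure (sympTransvSet B m) ≤ (Units.map LinearMap.det).ker by
    simpa [Units.ext_iff] using this hg
  rw [Subgroup.closure_le]
  rintro t ⟨a, v, -, ht⟩
  simp [Units.ext_iff, ht, det_sympTransvect hB]

-- `b` with `b j` replaced by `v` is the image of `b` under `y ↦ y + b.coord j y • (v - b j)`.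
lemma isBasisVector_of_isUnit_repr {m : ℕ} (b : Module.Basis (Fin m ⊕ Fin m) R V) {v : V}
    {j : Fin m ⊕ Fin m} (h : IsUnit (b.repr v j)) : IsBasisVector R m v := by
  have h' : IsUnit (1 + b.coord j (v - b j)) := by simpa using h
  exact ⟨b.map (LinearEquiv.dilatransvection h'), j, by simp [LinearEquiv.dilatransvection.apply]⟩

section LocalRing

variable [IsLocalRing R] {B : V →ₗ[R] V →ₗ[R] R} {m : ℕ}

lemma IsLocalRing.isUnit_add_of_not_isUnit_left {a b : R} (ha : ¬IsUnit a) (hb : IsUnit b) :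
    IsUnit (a + b) := by
  refine (IsLocalRing.isUnit_or_isUnit_of_isUnit_add (a := a + b) (b := -a) ?_).resolve_right ?_
  · simpa using hb
  · simpa using ha

lemma exists_isUnit_isUnit_of_mem (W : Submodule R V) (φ ψ : V →ₗ[R] R) {v w : V} (hv : v ∈ W)
    (hw : w ∈ W) (hφ : IsUnit (φ v)) (hψ : IsUnit (ψ w)) :
    ∃ z ∈ W, IsUnit (φ z) ∧ IsUnit (ψ z) := by
  by_cases hψv : IsUnit (ψ v)
  · exact ⟨v, hv, hφ, hψv⟩
  by_cases hφw : IsUnit (φ w)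
  · exact ⟨w, hw, hφw, hψ⟩
  refine ⟨v + w, W.add_mem hv hw, ?_, ?_⟩ <;> rw [map_add]
  · exact add_comm (φ w) (φ v) ▸ IsLocalRing.isUnit_add_of_not_isUnit_left hφw hφ
  · exact IsLocalRing.isUnit_add_of_not_isUnit_left hψv hψ

lemma Module.Basis.exists_isUnit_repr {ι : Type*} [Fintype ι] (b : Module.Basis ι R V)
    (φ : V →ₗ[R] R) {v : V} (h : IsUnit (φ v)) : ∃ j, IsUnit (b.repr v j) := by
  rw [← b.sum_repr v, map_sum] at h
  obtain ⟨j, -, hj⟩ := IsLocalRing.exists_of_isUnit_sum h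
  rw [map_smul, smul_eq_mul] at hj
  exact ⟨j, isUnit_of_mul_isUnit_left hj⟩

lemma isBasisVector_of_isUnit_apply (b : Module.Basis (Fin m ⊕ Fin m) R V) (φ : V →ₗ[R] R)
    {v : V} (h : IsUnit (φ v)) : IsBasisVector R m v :=
  (b.exists_isUnit_repr φ h).elim fun _ hj => isBasisVector_of_isUnit_repr b hj

lemma exists_mem_closure_apply_eq_of_isUnit (hB : B.IsAlt)
    (b : Module.Basis (Fin m ⊕ Fin m) R V) {u x : V} (h : IsUnit (B x u)) :
    ∃ t ∈ Subgroup.closure (sympTransvSet B m), (t : Module.End R V) u = x ∧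
      ∀ w, B (x - u) w = 0 → (t : Module.End R V) w = w := by
  obtain ⟨c, hc⟩ := h.exists_left_inv
  have hxu : B (x - u) u = B x u := by simp [hB.self_eq_zero]
  have hbasis : IsBasisVector R m (x - u) :=
    isBasisVector_of_isUnit_apply b (B.flip u) (hxu.symm ▸ h)
  obtain ⟨t, ht, htv⟩ := exists_mem_sympTransvSet hB c hbasis
  refine ⟨t, Subgroup.subset_closure ht, ?_, fun w hw => ?_⟩
  · rw [htv, sympTransvect_apply, hxu, hc, one_smul, add_sub_cancel]
  · rw [htv, sympTransvect_apply, hw, mul_zero, zero_smul, add_zero]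

-- When `⟨x, u⟩` is not a unit, pass through `z = u + z'` with `⟨z', u⟩` and `⟨x, z'⟩` units.
lemma exists_mem_closure_apply_eq (hB : B.IsAlt) (b : Module.Basis (Fin m ⊕ Fin m) R V)
    (S : Set V) {u x v w : V} (hxu : ∀ s ∈ S, B s (x - u) = 0) (hv : ∀ s ∈ S, B s v = 0)
    (hw : ∀ s ∈ S, B s w = 0) (hvu : IsUnit (B v u)) (hxw : IsUnit (B x w)) :
    ∃ t ∈ Subgroup.closure (sympTransvSet B m), (t : Module.End R V) u = x ∧
      ∀ s ∈ S, (t : Module.End R V) s = s := by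
  set W : Submodule R V := ⨅ s ∈ S, LinearMap.ker (B s)
  have memW {y : V} : y ∈ W ↔ ∀ s ∈ S, B s y = 0 := by simp [W]
  have fixes {d : V} (hd : d ∈ W) {s : V} (hs : s ∈ S) : B d s = 0 := by
    rw [← hB.neg, memW.1 hd s hs, neg_zero]
  by_cases hxu' : IsUnit (B x u)
  · obtain ⟨t, ht, htu, htfix⟩ := exists_mem_closure_apply_eq_of_isUnit hB b hxu'
    exact ⟨t, ht, htu, fun s hs => htfix s (fixes (memW.2 hxu) hs)⟩
  obtain ⟨z', hz'W, hz'u, hxz'⟩ :=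
    exists_isUnit_isUnit_of_mem W (B.flip u) (B x) (memW.2 hv) (memW.2 hw) hvu hxw
  have hzu : IsUnit (B (u + z') u) := by simpa [hB.self_eq_zero] using hz'u
  have hxz : IsUnit (B x (u + z')) := by
    rw [map_add]
    exact IsLocalRing.isUnit_add_of_not_isUnit_left hxu' hxz'
  obtain ⟨t₁, ht₁, ht₁u, ht₁fix⟩ := exists_mem_closure_apply_eq_of_isUnit hB b hzu
  obtain ⟨t₂, ht₂, ht₂z, ht₂fix⟩ := exists_mem_closure_apply_eq_of_isUnit hB b hxz
  refine ⟨t₂ * t₁, mul_mem ht₂ ht₁, by simp [ht₁u, ht₂z], fun s hs => ?_⟩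
  have h₁ : B (u + z' - u) s = 0 := fixes (by simpa using hz'W) hs
  have h₂ : B (x - (u + z')) s = 0 :=
    fixes (by simpa [sub_add_eq_sub_sub] using W.sub_mem (memW.2 hxu) hz'W) hs
  simp [ht₁fix s h₁, ht₂fix s h₂]

lemma exists_mem_closure_eqOn_pair (hB : B.IsAlt) (b : Module.Basis (Fin m ⊕ Fin m) R V)
    (S : Set V) {e f : V} (hef : B e f = 1) (he : ∀ s ∈ S, B s e = 0)
    (hf : ∀ s ∈ S, B s f = 0) {g : Module.End R V} (hg : B.IsOrthogonal g)
    (hgS : ∀ s ∈ S, g s = s) :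
    ∃ t ∈ Subgroup.closure (sympTransvSet B m), (t : Module.End R V) e = g e ∧
      (t : Module.End R V) f = g f ∧ ∀ s ∈ S, (t : Module.End R V) s = s := by
  have hgS' {y : V} (hy : ∀ s ∈ S, B s y = 0) (s : V) (hs : s ∈ S) : B s (g y) = 0 := by
    rw [← hgS s hs, hg, hy s hs]
  have hfe : B f e = -1 := by rw [← hB.neg, hef]
  obtain ⟨t₁, ht₁, ht₁e, ht₁S⟩ := exists_mem_closure_apply_eq hB b S (u := e) (x := g e)
    (fun s hs => by rw [map_sub, hgS' he s hs, he s hs, sub_zero]) hf (hgS' hf)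
    (by rw [hfe]; exact isUnit_one.neg) (by rw [hg, hef]; exact isUnit_one)
  have ht₁iso : B.IsOrthogonal (t₁ : Module.End R V) :=
    closure_sympTransvSet_le_isometryGroup hB m ht₁
  have ht₁f : ∀ s ∈ S, B s ((t₁ : Module.End R V) f) = 0 := fun s hs => by
    rw [← ht₁S s hs, ht₁iso, hf s hs]
  have hgef : B (g e) ((t₁ : Module.End R V) f) = 1 := by rw [← ht₁e, ht₁iso, hef]
  obtain ⟨t₂, ht₂, ht₂f, ht₂S⟩ := exists_mem_closure_apply_eq hB b (insert (g e) S)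
    (u := (t₁ : Module.End R V) f) (x := g f) (v := g e) (w := g e)
    (Set.forall_mem_insert.2 ⟨by rw [map_sub, hg, hef, hgef, sub_self],
      fun s hs => by rw [map_sub, hgS' hf s hs, ht₁f s hs, sub_self]⟩)
    (Set.forall_mem_insert.2 ⟨hB.self_eq_zero _, hgS' he⟩)
    (Set.forall_mem_insert.2 ⟨hB.self_eq_zero _, hgS' he⟩)
    (by rw [hgef]; exact isUnit_one) (by rw [hg, hfe]; exact isUnit_one.neg)
  refine ⟨t₂ * t₁, mul_mem ht₂ ht₁, ?_, by simp [ht₂f], fun s hs => ?_⟩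
  · simp [ht₁e, ht₂S (g e) (Set.mem_insert _ _)]
  · simp [ht₁S s hs, ht₂S s (Set.mem_insert_of_mem _ hs)]

lemma mem_closure_of_fixes_pairs_notMem
    (hB : B.IsAlt) (b : Module.Basis (Fin m ⊕ Fin m) R V)
    (hb1 : ∀ i j, B (b (.inl i)) (b (.inr j)) = if i = j then 1 else 0)
    (hb2 : ∀ i j, B (b (.inl i)) (b (.inl j)) = 0)
    (hb3 : ∀ i j, B (b (.inr i)) (b (.inr j)) = 0)
    (s : Finset (Fin m)) {g : (Module.End R V)ˣ} (hg : g ∈ isometryGroup B)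
    (hgs : ∀ i ∉ s, (g : Module.End R V) (b (.inl i)) = b (.inl i) ∧
      (g : Module.End R V) (b (.inr i)) = b (.inr i)) :
    g ∈ Subgroup.closure (sympTransvSet B m) := by
  induction s using Finset.induction_on generalizing g with
  | empty =>
    have : g = 1 := Units.ext <| b.ext fun
      | .inl i => (hgs i (Finset.notMem_empty i)).1
      | .inr i => (hgs i (Finset.notMem_empty i)).2
    exact this ▸ one_mem _
  | insert κ s _ ih =>
    set S : Set V := {v | ∃ i ∉ insert κ s, v = b (.inl i) ∨ v = b (.inr i)}
    have hSe : ∀ v ∈ S, B v (b (.inl κ)) = 0 := by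
      rintro _ ⟨i, hi, rfl | rfl⟩
      · exact hb2 i κ
      · rw [← hB.neg, hb1, if_neg (by grind), neg_zero]
    have hSf : ∀ v ∈ S, B v (b (.inr κ)) = 0 := by
      rintro _ ⟨i, hi, rfl | rfl⟩
      · rw [hb1, if_neg (by grind)]
      · exact hb3 i κ
    have hgS : ∀ v ∈ S, (g : Module.End R V) v = v := by
      rintro _ ⟨i, hi, rfl | rfl⟩
      exacts [(hgs i hi).1, (hgs i hi).2]
    obtain ⟨t, ht, hte, htf, htS⟩ := exists_mem_closure_eqOn_pair hB b S
      (by simp [hb1]) hSe hSf hg hgS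
    have fixes {y : V} (h : (t : Module.End R V) y = (g : Module.End R V) y) :
        ((t⁻¹ * g : (Module.End R V)ˣ) : Module.End R V) y = y := by
      rw [Units.val_mul, Module.End.mul_apply, ← h, Module.End.units_inv_apply_apply]
    have hts : t⁻¹ * g ∈ Subgroup.closure (sympTransvSet B m) := by
      refine ih (mul_mem (inv_mem (closure_sympTransvSet_le_isometryGroup hB m ht)) hg)
        fun i hi => ?_
      by_cases hiκ : i = κ
      · exact hiκ ▸ ⟨fixes hte, fixes htf⟩
      have hi' : i ∉ insert κ s := by simp [hi, hiκ]
      exact ⟨fixes (by rw [htS _ ⟨i, hi', .inl rfl⟩, (hgs i hi').1]),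
        fixes (by rw [htS _ ⟨i, hi', .inr rfl⟩, (hgs i hi').2])⟩
    simpa using mul_mem ht hts

end LocalRing

theorem stmt16_general [IsLocalRing R] {m : ℕ}
    (B : V →ₗ[R] V →ₗ[R] R)
    (halt : ∀ x, B x x = 0)
    (b : Module.Basis (Fin m ⊕ Fin m) R V)
    (hb1 : ∀ i j, B (b (.inl i)) (b (.inr j)) = if i = j then 1 else 0)
    (hb2 : ∀ i j, B (b (.inl i)) (b (.inl j)) = 0)
    (hb3 : ∀ i j, B (b (.inr i)) (b (.inr j)) = 0)
    (g : (Module.End R V)ˣ) :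
    ((∀ x y, B ((g : Module.End R V) x) ((g : Module.End R V) y) = B x y) ↔
        g ∈ Subgroup.closure (sympTransvSet B m)) ∧
    ((∀ x y, B ((g : Module.End R V) x) ((g : Module.End R V) y) = B x y) →
        LinearMap.det (g : Module.End R V) = 1) := by
  have hiff : (∀ x y, B ((g : Module.End R V) x) ((g : Module.End R V) y) = B x y) ↔
      g ∈ Subgroup.closure (sympTransvSet B m) :=
    ⟨fun hg => mem_closure_of_fixes_pairs_notMem halt b hb1 hb2 hb3 .univ hg (by simp),
      fun hg => closure_sympTransvSet_le_isometryGroup halt m hg⟩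
  exact ⟨hiff, fun hg => det_eq_one_of_mem_closure_sympTransvSet halt (hiff.1 hg)⟩

/-- over a commutative local ring `R`, the symplectic group `Sp(V)` of a
nondegenerate alternating form admitting a symplectic basis is generated by the
symplectic transvections `f_{a,v}` with `v` a basis vector; in particular every
symplectic transformation has determinant `1`. -/
theorem stmt16 [IsLocalRing R] {m : ℕ}
    (B : V →ₗ[R] V →ₗ[R] R)
    (halt : ∀ x, B x x = 0)
    (hnd : ∀ x, (∀ y, B x y = 0) → x = 0)
    (b : Module.Basis (Fin m ⊕ Fin m) R V)
    (hb1 : ∀ i j, B (b (.inl i)) (b (.inr j)) = if i = j then 1 else 0)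
    (hb2 : ∀ i j, B (b (.inl i)) (b (.inl j)) = 0)
    (hb3 : ∀ i j, B (b (.inr i)) (b (.inr j)) = 0)
    (g : (Module.End R V)ˣ) :
    ((∀ x y, B ((g : Module.End R V) x) ((g : Module.End R V) y) = B x y) ↔
        g ∈ Subgroup.closure (sympTransvSet B m)) ∧
    ((∀ x y, B ((g : Module.End R V) x) ((g : Module.End R V) y) = B x y) →
        LinearMap.det (g : Module.End R V) = 1) :=
  stmt16_general B halt b hb1 hb2 hb3 g
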